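/- arXiv:1809.00056 — 6 statements merged into one kernel-verified Lean document; each statement's English description precedes it below -/
import Mathlib

section
/- Let W be an m×m complex Hermitian positive definite matrix and let P, P_T > 0 satisfy P > 1/λ_min(W) and P_T > m/λ_min(W) − tr(W⁻¹). Define λ ≥ 0 as follows: λ = 0 if m·P ≤ P_T; otherwise λ > 0 is the solution of Σᵢ min(P, 1/λ − (W⁻¹)ᵢᵢ) = P_T. Define the Hermitian matrix R* by (R*)ᵢᵢ = min(P, 1/λ − (W⁻¹)ᵢᵢ) (interpreting 1/λ = +∞ when λ = 0, so (R*)ᵢᵢ = P in that case) and (R*)ᵢⱼ = −(W⁻¹)ᵢⱼ for i ≠ j. Then R* is positive definite, R* belongs to the joint constraint set S(P_T, P), and for every R ∈ S(P_T, P) one has log det(I + W·R) ≤ log det(I + W·R*); i.e., R* achieves the capacity under the joint total and per-antenna power constraints. -/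
/-!
With `A = W⁻¹` one has `1 + W R = W (A + R)`, so maximizing `log det (1 + W R)` amounts to
maximizing `log det (A + R)`. The choice of `R*` makes `A + R* = diagonal d` with
`dᵢ = R*ᵢᵢ + Aᵢᵢ`, and concavity of `log det` at `diagonal d` gives
`log det (A + R) ≤ log det (A + R*) + ∑ (Rᵢᵢ - R*ᵢᵢ) / dᵢ`.
The last sum is the KKT quantity of scalar water filling: `1 / dᵢ ≥ λ`, with equality
wherever `R*ᵢᵢ < P`, and `∑ R*ᵢᵢ = P_T` when `λ > 0`, so it is nonpositive on `S(P_T, P)`.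
Positive definiteness of `R* = diagonal d - A` holds because every `dᵢ` exceeds
`1 / λ_min(W)`, the largest eigenvalue of `A`; this is where the lower bounds on `P` and `P_T`
enter.
-/

open Matrix ComplexOrder

noncomputable def mutualInfo {m : ℕ} (W R : Matrix (Fin m) (Fin m) ℂ) : ℝ :=
  Real.log ((1 + W * R).det.re)

def jointSet (m : ℕ) (PT P : ℝ) : Set (Matrix (Fin m) (Fin m) ℂ) :=
  {R | R.PosSemidef ∧ R.trace.re ≤ PT ∧ ∀ i, (R i i).re ≤ P}

noncomputable def lamMin {m : ℕ} {W : Matrix (Fin m) (Fin m) ℂ} (hW : W.IsHermitian) : ℝ :=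
  sInf (Set.range hW.eigenvalues)

/-- Diagonal entries: `min(P, 1/λ − (W⁻¹)ᵢᵢ)` (equal to `P` when `λ = 0`);
off-diagonal entries: `−(W⁻¹)ᵢⱼ`. -/
noncomputable def Rstar {m : ℕ} (W : Matrix (Fin m) (Fin m) ℂ) (P lam : ℝ) :
    Matrix (Fin m) (Fin m) ℂ :=
  fun i j => if i = j then ((if lam = 0 then P else min P (1 / lam - (W⁻¹ i i).re) : ℝ) : ℂ)
    else -(W⁻¹ i j)

section WaterFilling

variable {ι : Type*}

noncomputable def waterfill (a : ι → ℝ) (P lam : ℝ) (i : ι) : ℝ :=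
  if lam = 0 then P else min P (1 / lam - a i)

lemma waterfill_le {a : ι → ℝ} {P lam : ℝ} (i : ι) : waterfill a P lam i ≤ P := by
  unfold waterfill
  split_ifs
  exacts [le_rfl, min_le_left _ _]

variable [Fintype ι]

def IsWaterLevel (a : ι → ℝ) (P PT lam : ℝ) : Prop :=
  (lam = 0 ∧ Fintype.card ι * P ≤ PT) ∨ (0 < lam ∧ ∑ i, min P (1 / lam - a i) = PT)

variable {a : ι → ℝ} {P PT lam : ℝ}

lemma isWaterLevel_of_imp (h₁ : Fintype.card ι * P ≤ PT → lam = 0)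
    (h₂ : PT < Fintype.card ι * P → 0 < lam ∧ ∑ i, min P (1 / lam - a i) = PT) :
    IsWaterLevel a P PT lam := by
  rcases le_or_gt (Fintype.card ι * P) PT with h | h
  · exact .inl ⟨h₁ h, h⟩
  · exact .inr (h₂ h)

lemma IsWaterLevel.sum_waterfill_le (h : IsWaterLevel a P PT lam) :
    ∑ i, waterfill a P lam i ≤ PT := by
  rcases h with ⟨rfl, h⟩ | ⟨hlam, h⟩
  · simpa [waterfill] using h
  · simp only [waterfill, hlam.ne', if_false, h, le_rfl]

lemma IsWaterLevel.lt_waterfill_add (h : IsWaterLevel a P PT lam) {c : ℝ} (hcP : c < P)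
    (ha : ∀ i, 0 ≤ a i) (hcPT : Fintype.card ι * c - ∑ i, a i < PT) (i : ι) :
    c < waterfill a P lam i + a i := by
  rcases h with ⟨rfl, -⟩ | ⟨hlam, hsum⟩
  · simp only [waterfill, if_true]
    linarith [ha i]
  · have hlevel : c < 1 / lam := by
      have hcard : (0 : ℝ) < Fintype.card ι := by exact_mod_cast Fintype.card_pos_iff.mpr ⟨i⟩
      have : PT ≤ ∑ i, (1 / lam - a i) := hsum ▸ Finset.sum_le_sum fun i _ => min_le_right _ _
      rw [Finset.sum_sub_distrib, Finset.sum_const, Finset.card_univ, nsmul_eq_mul] at this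
      exact lt_of_mul_lt_mul_left (by linarith) hcard.le
    rw [waterfill, if_neg hlam.ne', ← min_add_add_right, sub_add_cancel]
    exact lt_min (by linarith [ha i]) hlevel

lemma sub_div_le_mul_sub {a x P lam : ℝ} (hlam : 0 < lam) (hd : 0 < min P (1 / lam - a) + a)
    (hx : x ≤ P) :
    (x - min P (1 / lam - a)) / (min P (1 / lam - a) + a) ≤ lam * (x - min P (1 / lam - a)) := by
  rcases le_total (1 / lam - a) P with h | h
  · rw [min_eq_right h, sub_add_cancel, one_div, div_inv_eq_mul, mul_comm]
  · rw [min_eq_left h] at hd ⊢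
    have : lam ≤ 1 / (P + a) := (le_one_div hlam hd).mpr (by linarith)
    rw [div_eq_mul_one_div, mul_comm lam]
    exact mul_le_mul_of_nonpos_left this (by linarith)

lemma IsWaterLevel.sum_sub_div_nonpos (h : IsWaterLevel a P PT lam)
    (hd : ∀ i, 0 < waterfill a P lam i + a i) {x : ι → ℝ} (hxP : ∀ i, x i ≤ P)
    (hxPT : ∑ i, x i ≤ PT) :
    ∑ i, (x i - waterfill a P lam i) / (waterfill a P lam i + a i) ≤ 0 := by
  rcases h with ⟨rfl, -⟩ | ⟨hlam, hsum⟩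
  · refine Finset.sum_nonpos fun i _ => div_nonpos_of_nonpos_of_nonneg ?_ (hd i).le
    simpa [waterfill] using hxP i
  · simp only [waterfill, hlam.ne', if_false] at hd ⊢
    calc ∑ i, (x i - min P (1 / lam - a i)) / (min P (1 / lam - a i) + a i)
        ≤ ∑ i, lam * (x i - min P (1 / lam - a i)) :=
          Finset.sum_le_sum fun i _ => sub_div_le_mul_sub hlam (hd i) (hxP i)
      _ = lam * (∑ i, x i - PT) := by rw [← Finset.mul_sum, Finset.sum_sub_distrib, hsum]
      _ ≤ 0 := mul_nonpos_of_nonneg_of_nonpos hlam.le (by linarith)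

end WaterFilling

namespace Matrix

variable {n : Type*} [Fintype n]

lemma re_trace (B : Matrix n n ℂ) : B.trace.re = ∑ i, (B i i).re :=
  Complex.re_sum _ _

variable [DecidableEq n]

open scoped MatrixOrder in
lemma PosDef.posSemidef_diagonal_sub_inv {W : Matrix n n ℂ} (hW : W.PosDef) {c : ℝ}
    (hc : ∀ i, (hW.1.eigenvalues i)⁻¹ ≤ c) :
    (diagonal (fun _ => (c : ℂ)) - W⁻¹).PosSemidef := by
  have hdiag : diagonal (fun _ => (c : ℂ)) = algebraMap ℝ (Matrix n n ℂ) c := by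
    rw [algebraMap_eq_diagonal]
    rfl
  have h0 : ∀ x ∈ spectrum ℝ W, x ≠ 0 := fun x hx h =>
    spectrum.zero_notMem ℝ hW.isUnit (h ▸ hx)
  have hinv : W⁻¹ = cfc (fun x : ℝ => x⁻¹) W := by
    rw [cfc_ringInverse_id (a := W) hW.isUnit hW.1.isSelfAdjoint, nonsing_inv_eq_ringInverse]
  rw [← nonneg_iff_posSemidef, sub_nonneg, hinv, hdiag,
    cfc_le_algebraMap_iff _ _ _ (continuousOn_inv₀.mono h0) hW.1.isSelfAdjoint,
    hW.1.spectrum_real_eq_range_eigenvalues]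
  rintro _ ⟨i, rfl⟩
  exact hc i

lemma PosDef.ofReal_re_det {B : Matrix n n ℂ} (hB : B.PosDef) : (B.det.re : ℂ) = B.det :=
  (Complex.eq_re_of_ofReal_le (r := 0) (by simpa using hB.det_pos.le)).symm

lemma PosDef.re_det_pos {B : Matrix n n ℂ} (hB : B.PosDef) : 0 < B.det.re :=
  (Complex.pos_iff.mp hB.det_pos).1

lemma PosDef.log_re_det_le_re_trace_sub_card {M : Matrix n n ℂ} (hM : M.PosDef) :
    Real.log M.det.re ≤ M.trace.re - Fintype.card n := by
  have hμ := hM.eigenvalues_pos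
  rw [hM.1.det_eq_prod_eigenvalues, hM.1.trace_eq_sum_eigenvalues]
  simp only [RCLike.ofReal_eq_complex_ofReal, ← Complex.ofReal_prod, ← Complex.ofReal_sum,
    Complex.ofReal_re]
  rw [Real.log_prod fun i _ => (hμ i).ne']
  calc ∑ i, Real.log (hM.1.eigenvalues i) ≤ ∑ i, (hM.1.eigenvalues i - 1) :=
        Finset.sum_le_sum fun i _ => Real.log_le_sub_one_of_pos (hμ i)
    _ = _ := by simp [Finset.sum_sub_distrib]

/-- Concavity of `log det` at the positive diagonal matrix `diagonal d`. -/
lemma PosDef.log_re_det_le {B : Matrix n n ℂ} (hB : B.PosDef) {d : n → ℝ}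
    (hd : ∀ i, 0 < d i) :
    Real.log B.det.re ≤ ∑ i, Real.log (d i) + ∑ i, ((B i i).re - d i) / d i := by
  set s : n → ℝ := fun i => (√(d i))⁻¹
  have hs : ∀ i, s i * s i = (d i)⁻¹ := fun i => by
    rw [← mul_inv, Real.mul_self_sqrt (hd i).le]
  set S : Matrix n n ℂ := diagonal fun i => (s i : ℂ)
  have hSH : Sᴴ = S := by simp [S, diagonal_conjTranspose]
  have hSdet : S.det = ((∏ i, s i : ℝ) : ℂ) := by simp [S, det_diagonal]
  have hM : (S * B * S).PosDef := by
    have hSunit : IsUnit S := by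
      rw [isUnit_iff_isUnit_det, hSdet, isUnit_iff_ne_zero, Complex.ofReal_ne_zero]
      exact Finset.prod_ne_zero_iff.mpr fun i _ => (inv_pos.mpr (Real.sqrt_pos.mpr (hd i))).ne'
    have := hB.mul_mul_conjTranspose_same (vecMul_injective_iff_isUnit.mpr hSunit)
    rwa [hSH] at this
  have hdet : (S * B * S).det.re = (∏ i, (d i)⁻¹) * B.det.re := by
    rw [det_mul, det_mul, hSdet, ← hB.ofReal_re_det, ← Complex.ofReal_mul, ← Complex.ofReal_mul,
      Complex.ofReal_re, ← Finset.prod_congr rfl fun i _ => hs i, Finset.prod_mul_distrib,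
      Complex.ofReal_re]
    ring
  have htr : (S * B * S).trace.re = ∑ i, (B i i).re / d i := by
    rw [re_trace]
    refine Finset.sum_congr rfl fun i _ => ?_
    simp only [S, mul_diagonal, diagonal_mul, Complex.re_ofReal_mul, Complex.re_mul_ofReal]
    rw [div_eq_mul_inv, ← hs]
    ring
  have key := hM.log_re_det_le_re_trace_sub_card
  have hd' : ∀ i ∈ Finset.univ, (d i)⁻¹ ≠ 0 := fun i _ => inv_ne_zero (hd i).ne'
  rw [hdet, htr, Real.log_mul (Finset.prod_ne_zero_iff.mpr hd') hB.re_det_pos.ne',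
    Real.log_prod hd'] at key
  have hsum : ∑ i, ((B i i).re - d i) / d i = ∑ i, (B i i).re / d i - Fintype.card n := by
    simp [sub_div, div_self (hd _).ne', Finset.sum_sub_distrib]
  simp only [Real.log_inv, Finset.sum_neg_distrib] at key
  linarith

end Matrix

lemma lamMin_le_eigenvalues {m : ℕ} {W : Matrix (Fin m) (Fin m) ℂ} (hW : W.IsHermitian)
    (i : Fin m) :
    lamMin hW ≤ hW.eigenvalues i :=
  csInf_le (Set.finite_range _).bddBelow ⟨i, rfl⟩

lemma lamMin_pos {m : ℕ} [NeZero m] {W : Matrix (Fin m) (Fin m) ℂ} (hW : W.PosDef) :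
    0 < lamMin hW.1 := by
  obtain ⟨j, hj⟩ := (Set.range_nonempty hW.1.eigenvalues).csInf_mem (Set.finite_range _)
  rw [lamMin, ← hj]
  exact hW.eigenvalues_pos j

section Rstar

variable {m : ℕ} {W : Matrix (Fin m) (Fin m) ℂ} {P PT lam : ℝ}

noncomputable def invDiag (W : Matrix (Fin m) (Fin m) ℂ) (i : Fin m) : ℝ :=
  (W⁻¹ i i).re

lemma invDiag_pos (hW : W.PosDef) (i : Fin m) : 0 < invDiag W i :=
  (Complex.pos_iff.mp hW.inv.diag_pos).1

lemma Rstar_apply_self (i : Fin m) : Rstar W P lam i i = waterfill (invDiag W) P lam i := by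
  simp [Rstar, waterfill, invDiag]

lemma Rstar_eq_diagonal_sub_inv (hW : W.IsHermitian) :
    Rstar W P lam =
      diagonal (fun i => ((waterfill (invDiag W) P lam i + invDiag W i : ℝ) : ℂ)) - W⁻¹ := by
  ext i j
  obtain rfl | h := eq_or_ne i j
  · rw [Rstar_apply_self, Matrix.sub_apply, diagonal_apply_eq, Complex.ofReal_add, invDiag,
      Complex.conj_eq_iff_re.mp (hW.inv.apply i i), add_sub_cancel_right]
  · simp [Rstar, h]

lemma Rstar_posDef (hW : W.PosDef)
    (hlevel : ∀ i, 1 / lamMin hW.1 < waterfill (invDiag W) P lam i + invDiag W i) :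
    (Rstar W P lam).PosDef := by
  set d := fun i => waterfill (invDiag W) P lam i + invDiag W i
  have hsplit : diagonal (fun i => (d i : ℂ)) - W⁻¹ =
      diagonal (fun i => ((d i - 1 / lamMin hW.1 : ℝ) : ℂ)) +
        (diagonal (fun _ => ((1 / lamMin hW.1 : ℝ) : ℂ)) - W⁻¹) := by
    rw [← add_sub_assoc, diagonal_add]
    simp
  rw [Rstar_eq_diagonal_sub_inv hW.1, hsplit]
  refine (posDef_diagonal_iff.mpr fun i => ?_).add_posSemidef
    (hW.posSemidef_diagonal_sub_inv fun i => ?_)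
  · exact Complex.zero_lt_real.mpr (sub_pos.mpr (hlevel i))
  · have : NeZero m := ⟨i.pos.ne'⟩
    rw [one_div]
    exact inv_anti₀ (lamMin_pos hW) (lamMin_le_eigenvalues hW.1 i)

lemma Rstar_mem_jointSet (hlevel : IsWaterLevel (invDiag W) P PT lam)
    (hRstar : (Rstar W P lam).PosDef) : Rstar W P lam ∈ jointSet m PT P := by
  refine ⟨hRstar.posSemidef, ?_, fun i => ?_⟩
  · simpa only [re_trace, Rstar_apply_self, Complex.ofReal_re] using hlevel.sum_waterfill_le
  · rw [Rstar_apply_self, Complex.ofReal_re]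
    exact waterfill_le i

lemma mutualInfo_eq_log_det_add (hW : W.PosDef) {R : Matrix (Fin m) (Fin m) ℂ}
    (hR : (W⁻¹ + R).PosDef) :
    mutualInfo W R = Real.log W.det.re + Real.log (W⁻¹ + R).det.re := by
  have hfactor : 1 + W * R = W * (W⁻¹ + R) := by
    rw [mul_add, mul_nonsing_inv _ ((isUnit_iff_isUnit_det W).mp hW.isUnit)]
  rw [mutualInfo, hfactor, det_mul, Complex.mul_re, ← (Complex.pos_iff.mp hW.det_pos).2, zero_mul,
    sub_zero, Real.log_mul hW.re_det_pos.ne' hR.re_det_pos.ne']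

lemma mutualInfo_le_mutualInfo_Rstar (hW : W.PosDef)
    (hlevel : IsWaterLevel (invDiag W) P PT lam) (hRstar : (Rstar W P lam).PosDef)
    {R : Matrix (Fin m) (Fin m) ℂ} (hR : R ∈ jointSet m PT P) :
    mutualInfo W R ≤ mutualInfo W (Rstar W P lam) := by
  set d := fun i => waterfill (invDiag W) P lam i + invDiag W i
  have hdiag : W⁻¹ + Rstar W P lam = diagonal (fun i => (d i : ℂ)) := by
    rw [Rstar_eq_diagonal_sub_inv hW.1, add_sub_cancel]
  have hstar : (W⁻¹ + Rstar W P lam).PosDef := hW.inv.add hRstar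
  have hd : ∀ i, 0 < d i := by
    rw [hdiag, posDef_diagonal_iff] at hstar
    exact fun i => Complex.zero_lt_real.mp (hstar i)
  have hB : (W⁻¹ + R).PosDef := hW.inv.add_posSemidef hR.1
  have hfirst := hlevel.sum_sub_div_nonpos hd hR.2.2 (by rw [← re_trace]; exact hR.2.1)
  have hconcave := hB.log_re_det_le hd
  have hterm : ∀ i, ((W⁻¹ + R) i i).re - d i = (R i i).re - waterfill (invDiag W) P lam i := by
    intro i
    simp only [d, Matrix.add_apply, Complex.add_re, invDiag]
    ring
  simp only [hterm] at hconcave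
  rw [mutualInfo_eq_log_det_add hW hB, mutualInfo_eq_log_det_add hW hstar, hdiag, det_diagonal,
    ← Complex.ofReal_prod, Complex.ofReal_re, Real.log_prod fun i _ => (hd i).ne']
  linarith

end Rstar

theorem stmt0_general (m : ℕ) (W : Matrix (Fin m) (Fin m) ℂ) (hW : W.PosDef)
    (P PT : ℝ)
    (hPlow : 1 / lamMin hW.1 < P)
    (hPTlow : m / lamMin hW.1 - (W⁻¹).trace.re < PT)
    (lam : ℝ)
    (hlam1 : m * P ≤ PT → lam = 0)
    (hlam2 : PT < m * P → 0 < lam ∧ ∑ i, min P (1 / lam - (W⁻¹ i i).re) = PT) :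
    (Rstar W P lam).PosDef ∧ Rstar W P lam ∈ jointSet m PT P ∧
      ∀ R ∈ jointSet m PT P, mutualInfo W R ≤ mutualInfo W (Rstar W P lam) := by
  have hlevel : IsWaterLevel (invDiag W) P PT lam :=
    isWaterLevel_of_imp (by simpa using hlam1) (by simpa [invDiag] using hlam2)
  have hPTlow' : Fintype.card (Fin m) * (1 / lamMin hW.1) - ∑ i, invDiag W i < PT := by
    rw [Fintype.card_fin, ← div_eq_mul_one_div]
    rwa [re_trace] at hPTlow
  have hRstar : (Rstar W P lam).PosDef :=
    Rstar_posDef hW (hlevel.lt_waterfill_add hPlow (fun i => (invDiag_pos hW i).le) hPTlow')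
  exact ⟨hRstar, Rstar_mem_jointSet hlevel hRstar,
    fun R hR => mutualInfo_le_mutualInfo_Rstar hW hlevel hRstar hR⟩

/-- Full-rank optimal covariance under the joint total and per-antenna power constraints. -/
theorem stmt0 (m : ℕ) (hm : 1 ≤ m) (W : Matrix (Fin m) (Fin m) ℂ) (hW : W.PosDef)
    (P PT : ℝ) (hP : 0 < P) (hPT : 0 < PT)
    (hPlow : 1 / lamMin hW.1 < P)
    (hPTlow : m / lamMin hW.1 - (W⁻¹).trace.re < PT)
    (lam : ℝ) (hlam0 : 0 ≤ lam)
    (hlam1 : m * P ≤ PT → lam = 0)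
    (hlam2 : PT < m * P → 0 < lam ∧ ∑ i, min P (1 / lam - (W⁻¹ i i).re) = PT) :
    (Rstar W P lam).PosDef ∧ Rstar W P lam ∈ jointSet m PT P ∧
      ∀ R ∈ jointSet m PT P, mutualInfo W R ≤ mutualInfo W (Rstar W P lam) :=
  stmt0_general m W hW P PT hPlow hPTlow lam hlam1 hlam2
end

section
/- Let W be an m×m complex Hermitian positive definite matrix and let P, P_T > 0 satisfy P > 1/λ_min(W) and P_T ≥ m·P. Then the matrix R* = P·I − D̄(W⁻¹), where D̄(W⁻¹) is the off-diagonal part of W⁻¹, is positive definite, lies in the joint constraint set S(P_T, P), and maximizes log det(I + W·R) over R ∈ S(P_T, P); moreover in this case the capacity under the joint constraints equals the capacity under the per-antenna constraints alone. -/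
open Matrix ComplexOrder

/-- The off-diagonal part `D̄(A) = A − D(A)` of a matrix. -/
def offDiag {m : ℕ} (A : Matrix (Fin m) (Fin m) ℂ) : Matrix (Fin m) (Fin m) ℂ :=
  fun i j => if i = j then 0 else A i j

/-- The per-antenna-only constraint set. -/
def pacSet (m : ℕ) (P : ℝ) : Set (Matrix (Fin m) (Fin m) ℂ) :=
  {R | R.PosSemidef ∧ ∀ i, (R i i).re ≤ P}

/-! Writing `1 + W R = W (W⁻¹ + R)`, Hadamard's inequality and the per-antenna constraint give
`det (1 + W R) ≤ det W · ∏ᵢ ((W⁻¹)ᵢᵢ + P)`, and `R* = P·I − D̄(W⁻¹)` attains this bound because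
`W⁻¹ + R*` is diagonal. Hadamard's inequality itself follows, after rescaling to unit diagonal,
from `∏ μᵢ ≤ exp (∑ (μᵢ - 1))` applied to the eigenvalues. `R*` is positive definite since
`R* = (P·I − W⁻¹) + D(W⁻¹)` and `P > 1/λ_min(W)` puts the spectrum of `W⁻¹` below `P`; its trace
is `m·P ≤ P_T`, so it lies in the smaller joint set and both suprema equal its value. -/

theorem Real.prod_le_exp_sum_sub_one {ι : Type*} (s : Finset ι) {f : ι → ℝ}
    (hf : ∀ i ∈ s, 0 ≤ f i) : ∏ i ∈ s, f i ≤ Real.exp (∑ i ∈ s, (f i - 1)) := by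
  rw [Real.exp_sum]
  exact Finset.prod_le_prod hf fun i _ => by linarith [Real.add_one_le_exp (f i - 1)]

namespace Matrix

section RCLike

variable {𝕜 n : Type*} [RCLike 𝕜] [Fintype n] [DecidableEq n]

theorem PosSemidef.det_le_one_of_diag_eq_one {N : Matrix n n 𝕜} (hN : N.PosSemidef)
    (hdiag : ∀ i, N i i = 1) : N.det ≤ 1 := by
  have hsum : ∑ i, hN.1.eigenvalues i = Fintype.card n := by
    have h := hN.1.trace_eq_sum_eigenvalues
    simp only [trace, diag, hdiag, Finset.sum_const, Finset.card_univ, nsmul_eq_mul,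
      mul_one] at h
    exact_mod_cast h.symm
  have hprod : ∏ i, hN.1.eigenvalues i ≤ 1 :=
    calc ∏ i, hN.1.eigenvalues i ≤ Real.exp (∑ i, (hN.1.eigenvalues i - 1)) :=
          Real.prod_le_exp_sum_sub_one _ fun i _ => hN.eigenvalues_nonneg i
      _ = 1 := by simp [Finset.sum_sub_distrib, hsum]
  rw [hN.1.det_eq_prod_eigenvalues, ← RCLike.ofReal_prod, ← RCLike.ofReal_one]
  exact RCLike.ofReal_le_ofReal.mpr hprod

theorem PosDef.det_le_prod_diag {M : Matrix n n 𝕜} (hM : M.PosDef) : M.det ≤ ∏ i, M i i := by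
  choose d hd_pos hd using fun i => RCLike.pos_iff_exists_ofReal.mp (hM.diag_pos (i := i))
  set σ : n → ℝ := fun i => (√(d i))⁻¹
  have hσ_pos : ∀ i, 0 < σ i := fun i => inv_pos.mpr (Real.sqrt_pos.mpr (hd_pos i))
  have hσ : ∀ i, σ i ^ 2 * d i = 1 := fun i => by
    simp [σ, inv_pow, Real.sq_sqrt (hd_pos i).le, (hd_pos i).ne']
  set S : Matrix n n 𝕜 := diagonal fun i => (σ i : 𝕜)
  have hS : IsUnit S := isUnit_diagonal.mpr <| Pi.isUnit_iff.mpr fun i =>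
    isUnit_iff_ne_zero.mpr <| RCLike.ofReal_ne_zero.mpr (hσ_pos i).ne'
  have hS_star : star S = S := by
    rw [star_eq_conjTranspose, diagonal_conjTranspose]
    exact congrArg diagonal (funext fun i => RCLike.conj_ofReal _)
  have hN : (S * M * S).PosDef := by
    simpa only [hS_star] using (hS.posDef_star_left_conjugate_iff).mpr hM
  have hN_diag : ∀ i, (S * M * S) i i = 1 := fun i => by
    rw [mul_diagonal, diagonal_mul, ← hd]
    exact_mod_cast by linear_combination hσ i
  have hle := hN.posSemidef.det_le_one_of_diag_eq_one hN_diag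
  rw [det_mul, det_mul, det_diagonal] at hle
  have hc : (0 : 𝕜) < ∏ i, (σ i : 𝕜) ^ 2 := by
    exact_mod_cast Finset.prod_pos fun i _ => pow_pos (hσ_pos i) 2
  refine le_of_mul_le_mul_right ?_ hc
  calc M.det * ∏ i, (σ i : 𝕜) ^ 2 = (∏ i, (σ i : 𝕜)) * M.det * ∏ i, (σ i : 𝕜) := by
        rw [Finset.prod_pow]; ring
    _ ≤ 1 := hle
    _ = (∏ i, M i i) * ∏ i, (σ i : 𝕜) ^ 2 := by
        simp only [← hd, ← Finset.prod_mul_distrib]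
        exact_mod_cast (Finset.prod_eq_one fun i _ => by linear_combination hσ i).symm

theorem PosDef.posDef_smul_one_sub_inv {W : Matrix n n 𝕜} (hW : W.PosDef) {c : ℝ}
    (hc : ∀ i, (hW.1.eigenvalues i)⁻¹ < c) : ((c : 𝕜) • 1 - W⁻¹).PosDef := by
  set φ := Unitary.conjStarAlgAut 𝕜 _ hW.1.eigenvectorUnitary
  have hinv : W⁻¹ = φ (diagonal fun i => ((hW.1.eigenvalues i)⁻¹ : 𝕜)) := by
    refine inv_eq_right_inv ?_
    nth_rw 1 [hW.1.spectral_theorem]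
    rw [← map_mul, diagonal_mul_diagonal, ← map_one φ, ← diagonal_one]
    congr 2
    funext i
    exact mul_inv_cancel₀ (RCLike.ofReal_ne_zero.mpr (hW.eigenvalues_pos i).ne')
  have hconj : (c : 𝕜) • 1 - W⁻¹ =
      φ (diagonal fun i => ((c - (hW.1.eigenvalues i)⁻¹ : ℝ) : 𝕜)) := by
    rw [hinv, ← map_one φ, ← map_smul, ← map_sub, smul_one_eq_diagonal, diagonal_sub]
    push_cast
    rfl
  rw [hconj, Unitary.conjStarAlgAut_apply,
    Unitary.isUnit_coe.posDef_star_right_conjugate_iff, posDef_diagonal_iff]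
  exact fun i => RCLike.ofReal_pos.mpr (sub_pos.mpr (hc i))

theorem det_one_add_mul_eq_det_mul_det_inv_add {W : Matrix n n 𝕜} (hW : IsUnit W)
    (R : Matrix n n 𝕜) : (1 + W * R).det = W.det * (W⁻¹ + R).det := by
  rw [← det_mul, mul_add, mul_nonsing_inv _ ((isUnit_iff_isUnit_det W).mp hW)]

theorem PosDef.det_one_add_mul_pos {W R : Matrix n n 𝕜} (hW : W.PosDef) (hR : R.PosSemidef) :
    0 < (1 + W * R).det := by
  rw [det_one_add_mul_eq_det_mul_det_inv_add hW.isUnit]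
  exact mul_pos hW.det_pos (hW.inv.add_posSemidef hR).det_pos

theorem PosDef.det_one_add_mul_le {W R : Matrix n n 𝕜} (hW : W.PosDef) (hR : R.PosSemidef)
    {c : 𝕜} (hRc : ∀ i, R i i ≤ c) : (1 + W * R).det ≤ W.det * ∏ i, (W⁻¹ i i + c) := by
  rw [det_one_add_mul_eq_det_mul_det_inv_add hW.isUnit]
  refine mul_le_mul_of_nonneg_left ?_ hW.det_pos.le
  exact (hW.inv.add_posSemidef hR).det_le_prod_diag.trans <|
    Finset.prod_le_prod (fun i _ => (hW.inv.add_posSemidef hR).diag_pos.le)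
      fun i _ => by rw [add_apply]; gcongr; exact hRc i

end RCLike

end Matrix

section OffDiag

variable {m : ℕ}

@[simp]
theorem offDiag_apply_self (A : Matrix (Fin m) (Fin m) ℂ) (i : Fin m) : offDiag A i i = 0 :=
  if_pos rfl

theorem smul_one_sub_offDiag_eq (c : ℂ) (A : Matrix (Fin m) (Fin m) ℂ) :
    c • 1 - offDiag A = (c • 1 - A) + diagonal A.diag := by
  ext i j
  by_cases h : i = j
  · subst h; simp [offDiag]
  · simp [offDiag, h]

theorem add_smul_one_sub_offDiag (c : ℂ) (A : Matrix (Fin m) (Fin m) ℂ) :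
    A + (c • 1 - offDiag A) = diagonal fun i => A i i + c := by
  ext i j
  by_cases h : i = j
  · subst h; simp [offDiag]
  · simp [offDiag, h]

theorem trace_smul_one_sub_offDiag (c : ℂ) (A : Matrix (Fin m) (Fin m) ℂ) :
    (c • 1 - offDiag A).trace = m * c := by
  simp [trace]

end OffDiag

section Capacity

variable {m : ℕ} {W : Matrix (Fin m) (Fin m) ℂ}

theorem inv_eigenvalues_lt_of_one_div_lamMin_lt (hW : W.PosDef) {c : ℝ}
    (hc : 1 / lamMin hW.1 < c) (i : Fin m) : (hW.1.eigenvalues i)⁻¹ < c := by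
  have hle : lamMin hW.1 ≤ hW.1.eigenvalues i :=
    csInf_le (Set.finite_range _).bddBelow ⟨i, rfl⟩
  obtain ⟨j, hj⟩ : lamMin hW.1 ∈ Set.range hW.1.eigenvalues :=
    Set.Nonempty.csInf_mem ⟨_, i, rfl⟩ (Set.finite_range _)
  have hpos : 0 < lamMin hW.1 := hj ▸ hW.eigenvalues_pos j
  calc (hW.1.eigenvalues i)⁻¹ ≤ (lamMin hW.1)⁻¹ := inv_anti₀ hpos hle
    _ = 1 / lamMin hW.1 := (one_div _).symm
    _ < c := hc

theorem posDef_smul_one_sub_offDiag_inv (hW : W.PosDef) {c : ℝ}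
    (hc : ∀ i, (hW.1.eigenvalues i)⁻¹ < c) : ((c : ℂ) • 1 - offDiag W⁻¹).PosDef := by
  rw [smul_one_sub_offDiag_eq]
  exact (hW.posDef_smul_one_sub_inv hc).add_posSemidef <|
    posSemidef_diagonal_iff.mpr fun i => hW.inv.diag_pos.le

theorem det_one_add_mul_smul_one_sub_offDiag_inv (hW : W.PosDef) (c : ℂ) :
    (1 + W * (c • 1 - offDiag W⁻¹)).det = W.det * ∏ i, (W⁻¹ i i + c) := by
  rw [det_one_add_mul_eq_det_mul_det_inv_add hW.isUnit, add_smul_one_sub_offDiag,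
    det_diagonal]

theorem mutualInfo_le_of_mem_pacSet (hW : W.PosDef) {P : ℝ} {R : Matrix (Fin m) (Fin m) ℂ}
    (hR : R ∈ pacSet m P) : mutualInfo W R ≤ mutualInfo W ((P : ℂ) • 1 - offDiag W⁻¹) := by
  obtain ⟨hR_psd, hR_diag⟩ := hR
  have hRP : ∀ i, R i i ≤ P := fun i =>
    Complex.le_def.mpr ⟨by simpa using hR_diag i,
      by simpa using (Complex.le_def.mp hR_psd.diag_nonneg).2.symm⟩
  have hle := hW.det_one_add_mul_le hR_psd hRP
  rw [← det_one_add_mul_smul_one_sub_offDiag_inv hW] at hle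
  exact Real.log_le_log (Complex.lt_def.mp (hW.det_one_add_mul_pos hR_psd)).1
    (Complex.le_def.mp hle).1

theorem isGreatest_mutualInfo_image (hW : W.PosDef) {P : ℝ}
    {S : Set (Matrix (Fin m) (Fin m) ℂ)} (hS : S ⊆ pacSet m P)
    (hmem : (P : ℂ) • 1 - offDiag W⁻¹ ∈ S) :
    IsGreatest (mutualInfo W '' S) (mutualInfo W ((P : ℂ) • 1 - offDiag W⁻¹)) :=
  ⟨⟨_, hmem, rfl⟩, by
    rintro _ ⟨R, hR, rfl⟩
    exact mutualInfo_le_of_mem_pacSet hW (hS hR)⟩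

end Capacity

theorem stmt6_general (m : ℕ) (W : Matrix (Fin m) (Fin m) ℂ) (hW : W.PosDef)
    (P PT : ℝ)
    (hPlow : 1 / lamMin hW.1 < P)
    (hPThigh : (m : ℝ) * P ≤ PT) :
    ((P : ℂ) • (1 : Matrix (Fin m) (Fin m) ℂ) - offDiag W⁻¹).PosDef ∧
    (P : ℂ) • (1 : Matrix (Fin m) (Fin m) ℂ) - offDiag W⁻¹ ∈ jointSet m PT P ∧
    (∀ R ∈ jointSet m PT P,
      mutualInfo W R ≤ mutualInfo W ((P : ℂ) • (1 : Matrix (Fin m) (Fin m) ℂ) - offDiag W⁻¹)) ∧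
    sSup (mutualInfo W '' jointSet m PT P) = sSup (mutualInfo W '' pacSet m P) := by
  have hPD := posDef_smul_one_sub_offDiag_inv hW
    (inv_eigenvalues_lt_of_one_div_lamMin_lt hW hPlow)
  have hjoint_subset : jointSet m PT P ⊆ pacSet m P := fun R hR => ⟨hR.1, hR.2.2⟩
  have hmem : (P : ℂ) • 1 - offDiag W⁻¹ ∈ jointSet m PT P :=
    ⟨hPD.posSemidef, by rw [trace_smul_one_sub_offDiag]; simpa using hPThigh,
      fun i => by simp⟩
  refine ⟨hPD, hmem, fun R hR => mutualInfo_le_of_mem_pacSet hW (hjoint_subset hR), ?_⟩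
  rw [(isGreatest_mutualInfo_image hW hjoint_subset hmem).csSup_eq,
    (isGreatest_mutualInfo_image hW subset_rfl (hjoint_subset hmem)).csSup_eq]

/-- When the total power constraint is inactive (`P_T ≥ m·P`), the matrix
`R* = P·I − D̄(W⁻¹)` is the full-rank optimum and the joint-constraint capacity equals
the per-antenna-only capacity. -/
theorem stmt6 (m : ℕ) (hm : 1 ≤ m) (W : Matrix (Fin m) (Fin m) ℂ) (hW : W.PosDef)
    (P PT : ℝ) (hP : 0 < P) (hPT : 0 < PT)
    (hPlow : 1 / lamMin hW.1 < P)
    (hPThigh : (m : ℝ) * P ≤ PT) :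
    ((P : ℂ) • (1 : Matrix (Fin m) (Fin m) ℂ) - offDiag W⁻¹).PosDef ∧
    (P : ℂ) • (1 : Matrix (Fin m) (Fin m) ℂ) - offDiag W⁻¹ ∈ jointSet m PT P ∧
    (∀ R ∈ jointSet m PT P,
      mutualInfo W R ≤ mutualInfo W ((P : ℂ) • (1 : Matrix (Fin m) (Fin m) ℂ) - offDiag W⁻¹)) ∧
    sSup (mutualInfo W '' jointSet m PT P) = sSup (mutualInfo W '' pacSet m P) :=
  stmt6_general m W hW P PT hPlow hPThigh
end

section
/- Let W be an m×m complex Hermitian positive definite matrix and P, P_T > 0. If R* ∈ S(P_T, P) maximizes log det(I + W·R) over S(P_T, P) and the total power constraint is inactive, i.e. tr R* < P_T, then every per-antenna constraint is active: (R*)ᵢᵢ = P for all i (hence m·P < P_T). Consequently, if at least one per-antenna constraint is inactive at the optimum ((R*)ᵢᵢ < P for some i), then the total power constraint is active (tr R* = P_T). -/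
open Matrix ComplexOrder

/-!
If `tr R* < P_T` and `(R*)ᵢᵢ < P`, then `R* + ε Eᵢᵢ` stays feasible for small `ε > 0`. Since
`1 + W R = W (W⁻¹ + R)`, the matrix determinant lemma gives
`det (1 + W (R + ε Eᵢᵢ)) = det (1 + W R) · (1 + ε ((W⁻¹ + R)⁻¹)ᵢᵢ)`, and the diagonal entries of
the positive definite matrix `(W⁻¹ + R)⁻¹` are positive, so the objective strictly increases.
-/

section Determinant

variable {n α : Type*} [Fintype n] [DecidableEq n] [CommRing α]

theorem Matrix.det_one_add_mul_single (M : Matrix n n α) (i : n) (ε : α) :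
    (1 + M * single i i ε).det = 1 + ε * M i i := by
  have hrankOne : M * single i i ε = vecMulVec (fun j => M j i) (Pi.single i ε) := by
    ext j k
    rw [vecMulVec_apply]
    rcases eq_or_ne k i with rfl | hk
    · simp
    · simp [mul_single_apply_of_ne _ _ _ _ _ hk, hk]
  rw [hrankOne, vecMulVec_eq Unit, det_one_add_replicateCol_mul_replicateRow, single_dotProduct]

theorem Matrix.one_add_mul_eq_mul_inv_add {W : Matrix n n α} (hW : IsUnit W.det)
    (R : Matrix n n α) : 1 + W * R = W * (W⁻¹ + R) := by
  rw [Matrix.mul_add, mul_nonsing_inv _ hW]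

theorem Matrix.det_one_add_mul_add_single {W R : Matrix n n α} (hW : IsUnit W.det)
    (hB : IsUnit (W⁻¹ + R).det) (i : n) (ε : α) :
    (1 + W * (R + single i i ε)).det = (1 + W * R).det * (1 + ε * (W⁻¹ + R)⁻¹ i i) := by
  have hfactor : 1 + W * (R + single i i ε) = (1 + W * R) * (1 + (W⁻¹ + R)⁻¹ * single i i ε) :=
    calc 1 + W * (R + single i i ε) = (1 + W * R) + W * single i i ε := by
          rw [Matrix.mul_add, add_assoc]
      _ = (1 + W * R) + W * (W⁻¹ + R) * (W⁻¹ + R)⁻¹ * single i i ε := by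
          rw [Matrix.mul_assoc W, mul_nonsing_inv _ hB, Matrix.mul_one]
      _ = (1 + W * R) * (1 + (W⁻¹ + R)⁻¹ * single i i ε) := by
          rw [← one_add_mul_eq_mul_inv_add hW, Matrix.mul_add, Matrix.mul_one, Matrix.mul_assoc]
  rw [hfactor, det_mul, det_one_add_mul_single]

end Determinant

theorem mutualInfo_lt_mutualInfo_add_single {m : ℕ} {W R : Matrix (Fin m) (Fin m) ℂ}
    (hW : W.PosDef) (hR : R.PosSemidef) (i : Fin m) {ε : ℝ} (hε : 0 < ε) :
    mutualInfo W R < mutualInfo W (R + single i i (ε : ℂ)) := by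
  have hB : (W⁻¹ + R).PosDef := hW.inv.add_posSemidef hR
  have hWdet : IsUnit W.det := isUnit_iff_ne_zero.mpr hW.det_pos.ne'
  have hBdet : IsUnit (W⁻¹ + R).det := isUnit_iff_ne_zero.mpr hB.det_pos.ne'
  have hdet_pos : 0 < (1 + W * R).det := by
    rw [one_add_mul_eq_mul_inv_add hWdet, det_mul]
    exact mul_pos hW.det_pos hB.det_pos
  have hgain : 0 < (ε : ℂ) * (W⁻¹ + R)⁻¹ i i :=
    mul_pos (Complex.zero_lt_real.mpr hε) hB.inv.diag_pos
  have hdet_lt : (1 + W * R).det < (1 + W * (R + single i i (ε : ℂ))).det := by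
    rw [det_one_add_mul_add_single hWdet hBdet]
    exact lt_mul_of_one_lt_right hdet_pos (lt_add_of_pos_right 1 hgain)
  exact Real.log_lt_log (Complex.lt_def.mp hdet_pos).1 (Complex.lt_def.mp hdet_lt).1

theorem add_single_mem_jointSet {m : ℕ} {PT P : ℝ} {R : Matrix (Fin m) (Fin m) ℂ}
    (hR : R ∈ jointSet m PT P) (i : Fin m) {ε : ℝ} (hε : 0 ≤ ε)
    (htr : R.trace.re + ε ≤ PT) (hdiag : (R i i).re + ε ≤ P) :
    R + single i i (ε : ℂ) ∈ jointSet m PT P := by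
  obtain ⟨hpsd, -, hdiags⟩ := hR
  refine ⟨hpsd.add ?_, ?_, fun j => ?_⟩
  · rw [← diagonal_single]
    exact PosSemidef.diagonal (Pi.single_nonneg.mpr (Complex.zero_le_real.mpr hε))
  · simpa [trace_add, trace_single_eq_same] using htr
  · rcases eq_or_ne j i with rfl | hj
    · simpa using hdiag
    · simpa [single_apply_of_row_ne hj.symm] using hdiags j

theorem diag_re_eq_of_trace_re_lt {m : ℕ} {W : Matrix (Fin m) (Fin m) ℂ} (hW : W.PosDef)
    {PT P : ℝ} {R : Matrix (Fin m) (Fin m) ℂ} (hR : R ∈ jointSet m PT P)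
    (hopt : ∀ R' ∈ jointSet m PT P, mutualInfo W R' ≤ mutualInfo W R)
    (htr : R.trace.re < PT) (i : Fin m) : (R i i).re = P := by
  by_contra hne
  have hi : (R i i).re < P := (hR.2.2 i).lt_of_ne hne
  set ε := min (PT - R.trace.re) (P - (R i i).re)
  have hε : 0 < ε := lt_min (sub_pos.mpr htr) (sub_pos.mpr hi)
  have hε_tr : ε ≤ PT - R.trace.re := min_le_left _ _
  have hε_diag : ε ≤ P - (R i i).re := min_le_right _ _
  have hfeasible : R + single i i (ε : ℂ) ∈ jointSet m PT P :=
    add_single_mem_jointSet hR i hε.le (by linarith) (by linarith)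
  exact (hopt _ hfeasible).not_gt (mutualInfo_lt_mutualInfo_add_single hW hR.1 i hε)

theorem stmt9_general (m : ℕ) (W : Matrix (Fin m) (Fin m) ℂ) (hW : W.PosDef)
    (P PT : ℝ)
    (Rstar : Matrix (Fin m) (Fin m) ℂ) (hmem : Rstar ∈ jointSet m PT P)
    (hopt : ∀ R ∈ jointSet m PT P, mutualInfo W R ≤ mutualInfo W Rstar) :
    (Rstar.trace.re < PT → (∀ i, (Rstar i i).re = P) ∧ (m : ℝ) * P < PT) ∧
    ((∃ i, (Rstar i i).re < P) → Rstar.trace.re = PT) := by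
  have hactive := fun htr => diag_re_eq_of_trace_re_lt hW hmem hopt htr
  refine ⟨fun htr => ⟨hactive htr, ?_⟩, fun ⟨i, hi⟩ => ?_⟩
  · have htrace : Rstar.trace.re = m * P := by
      simp [trace, Complex.re_sum, hactive htr]
    linarith
  · by_contra hne
    exact hi.ne (hactive (hmem.2.1.lt_of_ne hne) i)

/-- If the total power constraint is inactive at an optimum, all per-antenna constraints
are active there (hence `m·P < P_T`); consequently, if some per-antenna constraint is
inactive at the optimum, the total power constraint is active. -/
theorem stmt9 (m : ℕ) (hm : 1 ≤ m) (W : Matrix (Fin m) (Fin m) ℂ) (hW : W.PosDef)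
    (P PT : ℝ) (hP : 0 < P) (hPT : 0 < PT)
    (Rstar : Matrix (Fin m) (Fin m) ℂ) (hmem : Rstar ∈ jointSet m PT P)
    (hopt : ∀ R ∈ jointSet m PT P, mutualInfo W R ≤ mutualInfo W Rstar) :
    (Rstar.trace.re < PT → (∀ i, (Rstar i i).re = P) ∧ (m : ℝ) * P < PT) ∧
    ((∃ i, (Rstar i i).re < P) → Rstar.trace.re = PT) :=
  stmt9_general m W hW P PT Rstar hmem hopt
end

section
/- Let W = diag(w₁, …, w_m) be a diagonal positive definite matrix (orthogonal channel) and let P, P_T > 0 satisfy P > 1/min_i wᵢ and P_T > Σᵢ (1/min_j w_j − 1/wᵢ). With λ ≥ 0 the total-power Lagrange multiplier (λ = 0 if m·P ≤ P_T, otherwise the solution of Σᵢ min(P, 1/λ − 1/wᵢ) = P_T), the diagonal matrix R* = diag(min(P, 1/λ − 1/wᵢ))ᵢ is positive definite, lies in S(P_T, P), and maximizes log det(I + W·R) over R ∈ S(P_T, P); i.e., for an orthogonal channel the optimal covariance is the entrywise minimum of the per-antenna-only optimum P·I and the total-power-only water-filling optimum (1/λ)·I − W⁻¹. -/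
open Matrix ComplexOrder

/-! Since `det (I + W R) = det (I + W^{1/2} R W^{1/2})`, Hadamard's inequality bounds the objective
by `∏ (1 + wᵢ Rᵢᵢ)`, which reduces the problem to maximizing `∑ log (1 + wᵢ rᵢ)` over
`rᵢ ≤ P`, `∑ rᵢ ≤ P_T`. The capped water-filling point `q` satisfies the KKT conditions of this
concave problem: the marginal gain `wᵢ / (1 + wᵢ qᵢ)` equals `λ` where `qᵢ < P` and is at least
`λ` where `qᵢ = P`, and `λ = 0` unless the total power is used up. Concavity of `log` then gives
optimality. Hadamard's inequality itself comes from `det C ≤ exp (tr C - n)` for positive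
semidefinite `C` (apply `x ≤ exp (x - 1)` to the eigenvalues), after rescaling to unit diagonal.
-/

namespace Matrix

variable {n 𝕜 : Type*} [DecidableEq n] [RCLike 𝕜]

theorem conjTranspose_diagonal_ofReal (d : n → ℝ) :
    (diagonal fun i => (d i : 𝕜))ᴴ = diagonal fun i => (d i : 𝕜) := by
  simp [diagonal_conjTranspose, Pi.star_def]

variable [Fintype n]

theorem PosSemidef.diagonal_ofReal_mul_mul_diagonal_ofReal {A : Matrix n n 𝕜} (hA : A.PosSemidef)
    (d : n → ℝ) :
    ((diagonal fun i => (d i : 𝕜)) * A * diagonal fun i => (d i : 𝕜)).PosSemidef := by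
  simpa only [conjTranspose_diagonal_ofReal] using
    hA.conjTranspose_mul_mul_same (diagonal fun i => (d i : 𝕜))

theorem PosSemidef.re_det_le_exp_re_trace_sub_card {A : Matrix n n 𝕜} (hA : A.PosSemidef) :
    RCLike.re A.det ≤ Real.exp (RCLike.re A.trace - Fintype.card n) := by
  have hev := hA.eigenvalues_nonneg
  rw [hA.isHermitian.det_eq_prod_eigenvalues, hA.isHermitian.trace_eq_sum_eigenvalues,
    ← RCLike.ofReal_prod, ← RCLike.ofReal_sum, RCLike.ofReal_re, RCLike.ofReal_re,
    Fintype.card_eq_sum_ones, Nat.cast_sum, Nat.cast_one, ← Finset.sum_sub_distrib, Real.exp_sum]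
  refine Finset.prod_le_prod (fun i _ => hev i) fun i _ => ?_
  linarith [Real.add_one_le_exp (hA.isHermitian.eigenvalues i - 1)]

/-- Hadamard's inequality. -/
theorem PosDef.re_det_le_prod_re_diag {B : Matrix n n 𝕜} (hB : B.PosDef) :
    RCLike.re B.det ≤ ∏ i, RCLike.re (B i i) := by
  set b : n → ℝ := fun i => RCLike.re (B i i)
  have hb : ∀ i, 0 < b i := fun i => (RCLike.pos_iff.mp hB.diag_pos).1
  have hBii : ∀ i, B i i = (b i : 𝕜) := fun i =>
    RCLike.ext (by simp [b]) (by simp [(RCLike.pos_iff.mp hB.diag_pos).2])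
  have hsq : ∀ i, (Real.sqrt (b i))⁻¹ * (Real.sqrt (b i))⁻¹ = (b i)⁻¹ := fun i => by
    rw [← mul_inv, Real.mul_self_sqrt (hb i).le]
  -- rescaled to unit diagonal, `B` has trace `card n`, so its determinant is at most `1`
  set E : Matrix n n 𝕜 := diagonal fun i => (((Real.sqrt (b i))⁻¹ : ℝ) : 𝕜)
  have hC : (E * B * E).PosSemidef := hB.posSemidef.diagonal_ofReal_mul_mul_diagonal_ofReal _
  have htr : RCLike.re (E * B * E).trace = Fintype.card n := by
    have hdiag : ∀ i, (E * B * E) i i = 1 := fun i => by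
      rw [mul_diagonal, diagonal_mul, hBii, ← RCLike.ofReal_mul, ← RCLike.ofReal_mul,
        mul_right_comm, hsq, inv_mul_cancel₀ (hb i).ne', RCLike.ofReal_one]
    simp [trace, hdiag]
  have hdet : RCLike.re (E * B * E).det = RCLike.re B.det * (∏ i, b i)⁻¹ := by
    have hdetE : E.det = ((∏ i, (Real.sqrt (b i))⁻¹ : ℝ) : 𝕜) := by
      rw [det_diagonal, RCLike.ofReal_prod]
    rw [det_mul, det_mul, hdetE, mul_right_comm, ← RCLike.ofReal_mul, ← Finset.prod_mul_distrib,
      Finset.prod_congr rfl fun i _ => hsq i, Finset.prod_inv_distrib, RCLike.re_ofReal_mul,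
      mul_comm]
  have hbound := hC.re_det_le_exp_re_trace_sub_card
  rw [htr, sub_self, Real.exp_zero, hdet] at hbound
  rwa [mul_inv_le_iff₀ (Finset.prod_pos fun i _ => hb i), one_mul] at hbound

theorem PosSemidef.re_det_one_add_diagonal_mul_le {R : Matrix n n 𝕜} (hR : R.PosSemidef)
    {w : n → ℝ} (hw : ∀ i, 0 ≤ w i) :
    0 < RCLike.re (1 + diagonal (fun i => (w i : 𝕜)) * R).det ∧
      RCLike.re (1 + diagonal (fun i => (w i : 𝕜)) * R).det ≤
        ∏ i, (1 + w i * RCLike.re (R i i)) := by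
  -- with `D = diag √w`, `det (1 + D² R) = det (1 + D R D)` and `1 + D R D` is positive definite
  set D : Matrix n n 𝕜 := diagonal fun i => ((Real.sqrt (w i) : ℝ) : 𝕜)
  have hDD : diagonal (fun i => (w i : 𝕜)) = D * D := by
    rw [diagonal_mul_diagonal]
    congr 1
    ext i
    rw [← RCLike.ofReal_mul, Real.mul_self_sqrt (hw i)]
  have hdet : (1 + diagonal (fun i => (w i : 𝕜)) * R).det = (1 + D * R * D).det := by
    rw [hDD, Matrix.mul_assoc, det_one_add_mul_comm, Matrix.mul_assoc]
  have hB : (1 + D * R * D).PosDef :=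
    PosDef.one.add_posSemidef (hR.diagonal_ofReal_mul_mul_diagonal_ofReal _)
  have hdiag : ∀ i, RCLike.re ((1 + D * R * D) i i) = 1 + w i * RCLike.re (R i i) := fun i => by
    rw [add_apply, mul_diagonal, diagonal_mul, one_apply_eq, mul_right_comm,
      ← RCLike.ofReal_mul, Real.mul_self_sqrt (hw i), map_add, RCLike.one_re,
      RCLike.re_ofReal_mul]
  rw [hdet]
  exact ⟨(RCLike.pos_iff.mp hB.det_pos).1, hB.re_det_le_prod_re_diag.trans_eq
    (Finset.prod_congr rfl fun i _ => hdiag i)⟩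

end Matrix

noncomputable def cappedWaterFilling (P lam a : ℝ) : ℝ :=
  if lam = 0 then P else min P (1 / lam - 1 / a)

section WaterFilling

variable {P lam a : ℝ}

theorem cappedWaterFilling_le : cappedWaterFilling P lam a ≤ P := by
  unfold cappedWaterFilling
  split_ifs
  exacts [le_rfl, min_le_left _ _]

theorem cappedWaterFilling_pos (hP : 0 < P) (hlevel : lam ≠ 0 → 1 / a < 1 / lam) :
    0 < cappedWaterFilling P lam a := by
  unfold cappedWaterFilling
  split_ifs with hlam
  exacts [hP, lt_min hP (sub_pos.mpr (hlevel hlam))]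

theorem cappedWaterFilling_kkt (ha : 0 < a) (hlam : 0 ≤ lam) (hP : 0 ≤ P) {r : ℝ} (hr : r ≤ P) :
    a / (1 + a * cappedWaterFilling P lam a) * (r - cappedWaterFilling P lam a) ≤
      lam * (r - cappedWaterFilling P lam a) := by
  have hPpos : 0 < 1 + a * P := by positivity
  unfold cappedWaterFilling
  split_ifs with hlam0
  · rw [hlam0, zero_mul]
    exact mul_nonpos_of_nonneg_of_nonpos (by positivity) (by linarith)
  have hlam : 0 < lam := lt_of_le_of_ne hlam (Ne.symm hlam0)
  rcases le_or_gt (1 / lam - 1 / a) P with hwater | hcap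
  · -- below the cap the marginal gain `a / (1 + a q)` equals the level `lam`
    rw [min_eq_right hwater]
    have : a / (1 + a * (1 / lam - 1 / a)) = lam := by
      field_simp [ha.ne']
      ring
    rw [this]
  · -- at the cap the marginal gain is at least `lam`, and `r - P ≤ 0`
    rw [min_eq_left hcap.le]
    refine mul_le_mul_of_nonpos_right ?_ (by linarith)
    rw [le_div_iff₀ hPpos]
    have := mul_lt_mul_of_pos_left hcap (mul_pos hlam ha)
    field_simp at this
    nlinarith

end WaterFilling

theorem one_div_lt_one_div_of_sum_min_eq {ι : Type*} [Fintype ι] {w : ι → ℝ} (hw : ∀ i, 0 < w i)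
    {P PT lam : ℝ} (hPTlow : ∑ i, (1 / sInf (Set.range w) - 1 / w i) < PT)
    (hsum : ∑ i, min P (1 / lam - 1 / w i) = PT) (i : ι) : 1 / w i < 1 / lam := by
  have : Nonempty ι := ⟨i⟩
  obtain ⟨j, hj⟩ := exists_eq_ciInf_of_finite (f := w)
  have hmin : sInf (Set.range w) = w j := hj.symm
  have hsum_le : PT ≤ ∑ i, (1 / lam - 1 / w i) :=
    hsum ▸ Finset.sum_le_sum fun i _ => min_le_right _ _
  obtain ⟨k, -, hk⟩ := Finset.exists_lt_of_sum_lt (hPTlow.trans_le hsum_le)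
  have hji : 1 / w i ≤ 1 / w j :=
    one_div_le_one_div_of_le (hw j) (hmin ▸ csInf_le (Set.finite_range w).bddBelow ⟨i, rfl⟩)
  rw [hmin] at hk
  linarith

theorem log_one_add_mul_le {a q r : ℝ} (hq : 0 < 1 + a * q) (hr : 0 < 1 + a * r) :
    Real.log (1 + a * r) ≤ Real.log (1 + a * q) + a / (1 + a * q) * (r - q) := by
  have h := Real.log_le_sub_one_of_pos (div_pos hr hq)
  rw [Real.log_div hr.ne' hq.ne'] at h
  have : (1 + a * r) / (1 + a * q) - 1 = a / (1 + a * q) * (r - q) := by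
    field_simp
    ring
  linarith

theorem prod_one_add_mul_le_of_kkt {ι : Type*} [Fintype ι] {w q r : ι → ℝ} {lam PT : ℝ}
    (hq : ∀ i, 0 < 1 + w i * q i) (hr : ∀ i, 0 < 1 + w i * r i) (hlam : 0 ≤ lam)
    (hgrad : ∀ i, w i / (1 + w i * q i) * (r i - q i) ≤ lam * (r i - q i))
    (hslack : lam = 0 ∨ ∑ i, q i = PT) (hrPT : ∑ i, r i ≤ PT) :
    ∏ i, (1 + w i * r i) ≤ ∏ i, (1 + w i * q i) := by
  have hfirst : ∑ i, w i / (1 + w i * q i) * (r i - q i) ≤ 0 :=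
    calc ∑ i, w i / (1 + w i * q i) * (r i - q i)
        ≤ ∑ i, lam * (r i - q i) := Finset.sum_le_sum fun i _ => hgrad i
      _ = lam * (∑ i, r i - ∑ i, q i) := by rw [← Finset.mul_sum, Finset.sum_sub_distrib]
      _ ≤ 0 := by
        rcases hslack with hlam0 | hqPT
        · rw [hlam0, zero_mul]
        · exact mul_nonpos_of_nonneg_of_nonpos hlam (by linarith)
  rw [← Real.log_le_log_iff (Finset.prod_pos fun i _ => hr i) (Finset.prod_pos fun i _ => hq i),
    Real.log_prod fun i _ => (hr i).ne', Real.log_prod fun i _ => (hq i).ne']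
  calc ∑ i, Real.log (1 + w i * r i)
      ≤ ∑ i, (Real.log (1 + w i * q i) + w i / (1 + w i * q i) * (r i - q i)) :=
        Finset.sum_le_sum fun i _ => log_one_add_mul_le (hq i) (hr i)
    _ ≤ ∑ i, Real.log (1 + w i * q i) := by
        rw [Finset.sum_add_distrib]
        linarith

section OrthogonalChannel

variable {m : ℕ} {w q : Fin m → ℝ} {P PT : ℝ}

theorem mutualInfo_diagonal :
    mutualInfo (diagonal fun i => (w i : ℂ)) (diagonal fun i => (q i : ℂ)) =
      Real.log (∏ i, (1 + w i * q i)) := by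
  rw [mutualInfo, diagonal_mul_diagonal, ← diagonal_one, diagonal_add, det_diagonal]
  norm_cast

theorem diagonal_mem_jointSet (hq : ∀ i, 0 ≤ q i) (hqP : ∀ i, q i ≤ P) (hqPT : ∑ i, q i ≤ PT) :
    diagonal (fun i => (q i : ℂ)) ∈ jointSet m PT P := by
  refine ⟨posSemidef_diagonal_iff.mpr fun i => Complex.zero_le_real.mpr (hq i), ?_, fun i => ?_⟩
  · rw [trace_diagonal, ← Complex.ofReal_sum, Complex.ofReal_re]
    exact hqPT
  · rw [diagonal_apply_eq, Complex.ofReal_re]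
    exact hqP i

theorem mutualInfo_le_of_kkt (hw : ∀ i, 0 ≤ w i) (hq : ∀ i, 0 ≤ q i) {lam : ℝ} (hlam : 0 ≤ lam)
    (hgrad : ∀ i r, r ≤ P → w i / (1 + w i * q i) * (r - q i) ≤ lam * (r - q i))
    (hslack : lam = 0 ∨ ∑ i, q i = PT) {R : Matrix (Fin m) (Fin m) ℂ} (hR : R ∈ jointSet m PT P) :
    mutualInfo (diagonal fun i => (w i : ℂ)) R ≤
      mutualInfo (diagonal fun i => (w i : ℂ)) (diagonal fun i => (q i : ℂ)) := by
  obtain ⟨hRpsd, hRPT, hRP⟩ := hR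
  obtain ⟨hdet_pos, hhadamard⟩ := hRpsd.re_det_one_add_diagonal_mul_le hw
  have hRii : ∀ i, 0 ≤ RCLike.re (R i i) := fun i => (RCLike.nonneg_iff.mp hRpsd.diag_nonneg).1
  rw [mutualInfo_diagonal, mutualInfo]
  refine Real.log_le_log hdet_pos (hhadamard.trans (prod_one_add_mul_le_of_kkt
    (fun i => add_pos_of_pos_of_nonneg one_pos (mul_nonneg (hw i) (hq i)))
    (fun i => add_pos_of_pos_of_nonneg one_pos (mul_nonneg (hw i) (hRii i))) hlam
    (fun i => hgrad i _ (hRP i)) hslack ?_))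
  simpa [trace, Complex.re_sum] using hRPT

end OrthogonalChannel

theorem stmt10_general (m : ℕ) (w : Fin m → ℝ) (hw : ∀ i, 0 < w i)
    (P PT : ℝ) (hP : 0 < P)
    (hPTlow : ∑ i, (1 / sInf (Set.range w) - 1 / w i) < PT)
    (lam : ℝ) (hlam0 : 0 ≤ lam)
    (hlam1 : m * P ≤ PT → lam = 0)
    (hlam2 : PT < m * P → 0 < lam ∧ ∑ i, min P (1 / lam - 1 / w i) = PT) :
    (Matrix.diagonal (fun i => ((if lam = 0 then P else min P (1 / lam - 1 / w i) : ℝ) : ℂ))).PosDef ∧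
    Matrix.diagonal (fun i => ((if lam = 0 then P else min P (1 / lam - 1 / w i) : ℝ) : ℂ))
      ∈ jointSet m PT P ∧
    ∀ R ∈ jointSet m PT P,
      mutualInfo (Matrix.diagonal (fun i => (w i : ℂ))) R ≤
        mutualInfo (Matrix.diagonal (fun i => (w i : ℂ)))
          (Matrix.diagonal (fun i => ((if lam = 0 then P else min P (1 / lam - 1 / w i) : ℝ) : ℂ))) := by
  have hlevel : lam ≠ 0 → ∑ i, min P (1 / lam - 1 / w i) = PT := fun hlam =>
    (hlam2 (lt_of_not_ge (hlam ∘ hlam1))).2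
  have hsum : lam ≠ 0 → ∑ i, cappedWaterFilling P lam (w i) = PT := fun hlam => by
    simpa only [cappedWaterFilling, if_neg hlam] using hlevel hlam
  have hq : ∀ i, 0 < cappedWaterFilling P lam (w i) := fun i =>
    cappedWaterFilling_pos hP fun hlam =>
      one_div_lt_one_div_of_sum_min_eq hw hPTlow (hlevel hlam) i
  have hqPT : ∑ i, cappedWaterFilling P lam (w i) ≤ PT := by
    by_cases hlam : lam = 0
    · have hfull : m * P ≤ PT := le_of_not_gt fun hshort => (hlam2 hshort).1.ne' hlam
      simpa [cappedWaterFilling, hlam] using hfull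
    · exact (hsum hlam).le
  exact ⟨posDef_diagonal_iff.mpr fun i => Complex.zero_lt_real.mpr (hq i),
    diagonal_mem_jointSet (fun i => (hq i).le) (fun _ => cappedWaterFilling_le) hqPT,
    fun R hR => mutualInfo_le_of_kkt (fun i => (hw i).le) (fun i => (hq i).le) hlam0
      (fun i _ hr => cappedWaterFilling_kkt (hw i) hlam0 hP.le hr)
      (or_iff_not_imp_left.mpr hsum) hR⟩

/-- Orthogonal channel `W = diag(w₁,…,w_m)`: the optimal covariance under the joint
constraints is the diagonal matrix with entries `min(P, 1/λ − 1/wᵢ)` (equal to `P`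
when `λ = 0`), i.e. the entrywise minimum of the per-antenna-only optimum `P·I` and
the total-power-only water-filling optimum `(1/λ)·I − W⁻¹`. -/
theorem stmt10 (m : ℕ) (hm : 1 ≤ m) (w : Fin m → ℝ) (hw : ∀ i, 0 < w i)
    (P PT : ℝ) (hP : 0 < P) (hPT : 0 < PT)
    (hPlow : 1 / sInf (Set.range w) < P)
    (hPTlow : ∑ i, (1 / sInf (Set.range w) - 1 / w i) < PT)
    (lam : ℝ) (hlam0 : 0 ≤ lam)
    (hlam1 : m * P ≤ PT → lam = 0)
    (hlam2 : PT < m * P → 0 < lam ∧ ∑ i, min P (1 / lam - 1 / w i) = PT) :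
    (Matrix.diagonal (fun i => ((if lam = 0 then P else min P (1 / lam - 1 / w i) : ℝ) : ℂ))).PosDef ∧
    Matrix.diagonal (fun i => ((if lam = 0 then P else min P (1 / lam - 1 / w i) : ℝ) : ℂ))
      ∈ jointSet m PT P ∧
    ∀ R ∈ jointSet m PT P,
      mutualInfo (Matrix.diagonal (fun i => (w i : ℂ))) R ≤
        mutualInfo (Matrix.diagonal (fun i => (w i : ℂ)))
          (Matrix.diagonal (fun i => ((if lam = 0 then P else min P (1 / lam - 1 / w i) : ℝ) : ℂ))) :=
  stmt10_general m w hw P PT hP hPTlow lam hlam0 hlam1 hlam2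
end

section
/- Let W be an m×m complex Hermitian positive definite matrix. Then C_TPC(P_T) − m·log(P_T/m) → log det(W) as P_T → +∞; i.e., at high SNR the total-power-constrained capacity is asymptotically achieved by the isotropic covariance (P_T/m)·I. -/
open Matrix ComplexOrder

/-- The total-power-only constraint set and its capacity. -/
def tpcSet (m : ℕ) (Q : ℝ) : Set (Matrix (Fin m) (Fin m) ℂ) :=
  {R | R.PosSemidef ∧ R.trace.re ≤ Q}

noncomputable def Ctpc (m : ℕ) (W : Matrix (Fin m) (Fin m) ℂ) (Q : ℝ) : ℝ :=
  sSup (mutualInfo W '' tpcSet m Q)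

/-!
For `R ⪰ 0` with `tr R ≤ Q`, `det (I + W R) = det W · det (W⁻¹ + R)`, and Jensen's inequality for
`log` on the eigenvalues of `W⁻¹ + R` gives `det (W⁻¹ + R) ≤ ((Q + tr W⁻¹) / m) ^ m`. Conversely,
the isotropic covariance `R = c I` gives `det (I + W R) = c ^ m ∏ (λᵢ + c⁻¹) ≥ c ^ m det W`.
With `c = Q / m`, `C_TPC(Q) - m log (Q / m)` is squeezed between `log det W` and
`log det W + m (log (Q + tr W⁻¹) - log Q)`, which tends to `log det W`.
-/

open Real Filter Topology

namespace Matrix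

variable {n : Type*} [Fintype n] [DecidableEq n] {A : Matrix n n ℂ}

lemma det_conjStarAlgAut (U : unitary (Matrix n n ℂ)) (X : Matrix n n ℂ) :
    (Unitary.conjStarAlgAut ℂ _ U X).det = X.det := by
  rw [Unitary.conjStarAlgAut_apply, det_mul, det_mul, mul_comm, ← mul_assoc, ← det_mul,
    Unitary.coe_star_mul_self, det_one, one_mul]

lemma IsHermitian.det_add_smul_one (hA : A.IsHermitian) (t : ℝ) :
    (A + (t : ℂ) • 1).det = ∏ i, ((hA.eigenvalues i + t : ℝ) : ℂ) := by
  conv_lhs => rw [hA.spectral_theorem,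
    ← map_one (Unitary.conjStarAlgAut ℂ _ hA.eigenvectorUnitary), ← map_smul, ← map_add,
    det_conjStarAlgAut, smul_one_eq_diagonal, diagonal_add, det_diagonal]
  simp

lemma IsHermitian.re_det_eq_prod_eigenvalues (hA : A.IsHermitian) :
    A.det.re = ∏ i, hA.eigenvalues i := by
  rw [hA.det_eq_prod_eigenvalues]
  norm_cast

lemma IsHermitian.re_trace_eq_sum_eigenvalues (hA : A.IsHermitian) :
    A.trace.re = ∑ i, hA.eigenvalues i := by
  rw [hA.trace_eq_sum_eigenvalues]
  norm_cast

lemma PosDef.re_det_pos_s13 (hA : A.PosDef) : 0 < A.det.re :=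
  (Complex.lt_def.mp hA.det_pos).1

lemma PosDef.im_det (hA : A.PosDef) : A.det.im = 0 :=
  (Complex.lt_def.mp hA.det_pos).2.symm

lemma PosDef.re_trace_pos [Nonempty n] (hA : A.PosDef) : 0 < A.trace.re := by
  rw [hA.isHermitian.re_trace_eq_sum_eigenvalues]
  exact Finset.sum_pos (fun i _ => hA.eigenvalues_pos i) Finset.univ_nonempty

lemma PosDef.log_re_det_le_s13 [Nonempty n] (hA : A.PosDef) :
    log A.det.re ≤ Fintype.card n * log (A.trace.re / Fintype.card n) := by
  have hN : (0 : ℝ) < Fintype.card n := by exact_mod_cast Fintype.card_pos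
  have jensen := strictConcaveOn_log_Ioi.concaveOn.le_map_sum (t := Finset.univ)
    (w := fun _ => (Fintype.card n : ℝ)⁻¹) (p := hA.isHermitian.eigenvalues)
    (fun _ _ => by positivity) (by simp [hN.ne']) (fun i _ => hA.eigenvalues_pos i)
  simp only [smul_eq_mul, ← Finset.mul_sum] at jensen
  rw [hA.isHermitian.re_det_eq_prod_eigenvalues, log_prod fun i _ => (hA.eigenvalues_pos i).ne',
    hA.isHermitian.re_trace_eq_sum_eigenvalues, div_eq_inv_mul]
  rwa [← inv_mul_le_iff₀ hN]

end Matrix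

variable {m : ℕ} {W : Matrix (Fin m) (Fin m) ℂ}

lemma zero_mem_tpcSet {Q : ℝ} (hQ : 0 ≤ Q) : (0 : Matrix (Fin m) (Fin m) ℂ) ∈ tpcSet m Q :=
  ⟨PosSemidef.zero, by simpa using hQ⟩

lemma smul_one_mem_tpcSet {c : ℝ} (hc : 0 ≤ c) :
    ((c : ℂ) • 1 : Matrix (Fin m) (Fin m) ℂ) ∈ tpcSet m (m * c) := by
  refine ⟨PosSemidef.one.smul (Complex.zero_le_real.mpr hc), ?_⟩
  simp [mul_comm]

lemma mutualInfo_le_of_mem_tpcSet (hm : 0 < m) (hW : W.PosDef) {Q : ℝ}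
    {R : Matrix (Fin m) (Fin m) ℂ} (hR : R ∈ tpcSet m Q) :
    mutualInfo W R ≤ log W.det.re + m * log ((Q + W⁻¹.trace.re) / m) := by
  obtain ⟨hR, hRQ⟩ := hR
  have : Nonempty (Fin m) := ⟨⟨0, hm⟩⟩
  have hM : (W⁻¹ + R).PosDef := hW.inv.add_posSemidef hR
  have hfactor : 1 + W * R = W * (W⁻¹ + R) := by
    rw [mul_add, mul_nonsing_inv _ ((isUnit_iff_isUnit_det _).mp hW.isUnit)]
  have htrace : (W⁻¹ + R).trace.re ≤ Q + W⁻¹.trace.re := by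
    rw [trace_add, Complex.add_re]
    linarith
  rw [mutualInfo, hfactor, det_mul, Complex.mul_re, hW.im_det, zero_mul, sub_zero,
    log_mul hW.re_det_pos_s13.ne' hM.re_det_pos_s13.ne']
  gcongr
  calc log (W⁻¹ + R).det.re ≤ m * log ((W⁻¹ + R).trace.re / m) := by
        simpa using hM.log_re_det_le_s13
    _ ≤ m * log ((Q + W⁻¹.trace.re) / m) := by
        have := hM.re_trace_pos
        gcongr

lemma log_det_add_mul_log_le_mutualInfo_smul_one (hW : W.PosDef) {c : ℝ} (hc : 0 < c) :
    log W.det.re + m * log c ≤ mutualInfo W ((c : ℂ) • 1) := by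
  have hfactor : 1 + W * ((c : ℂ) • 1) = (c : ℂ) • (W + ((c⁻¹ : ℝ) : ℂ) • 1) := by
    rw [mul_smul_comm, mul_one, smul_add, smul_smul, ← Complex.ofReal_mul, mul_inv_cancel₀ hc.ne',
      Complex.ofReal_one, one_smul, add_comm]
  have hpos : ∀ i, 0 < hW.isHermitian.eigenvalues i := hW.eigenvalues_pos
  have hprod : 0 < ∏ i, (hW.isHermitian.eigenvalues i + c⁻¹) :=
    Finset.prod_pos fun i _ => by have := hpos i; positivity
  rw [mutualInfo, hfactor, det_smul, hW.isHermitian.det_add_smul_one, Fintype.card_fin,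
    ← Complex.ofReal_pow, ← Complex.ofReal_prod, ← Complex.ofReal_mul, Complex.ofReal_re,
    log_mul (by positivity) hprod.ne', log_pow, add_comm,
    hW.isHermitian.re_det_eq_prod_eigenvalues]
  gcongr
  · exact Finset.prod_pos fun i _ => hpos i
  · exact fun i _ => (hpos i).le
  · exact le_add_of_nonneg_right (inv_pos.mpr hc).le

lemma log_det_le_Ctpc_sub (hm : 0 < m) (hW : W.PosDef) {Q : ℝ} (hQ : 0 < Q) :
    log W.det.re ≤ Ctpc m W Q - m * log (Q / m) := by
  have hm' : (0 : ℝ) < m := by exact_mod_cast hm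
  have hmem : ((Q / m : ℝ) : ℂ) • (1 : Matrix (Fin m) (Fin m) ℂ) ∈ tpcSet m Q := by
    simpa [mul_div_cancel₀ Q hm'.ne'] using smul_one_mem_tpcSet (m := m) (div_pos hQ hm').le
  have hbdd : BddAbove (mutualInfo W '' tpcSet m Q) :=
    ⟨_, Set.forall_mem_image.mpr fun _ hR => mutualInfo_le_of_mem_tpcSet hm hW hR⟩
  have := (log_det_add_mul_log_le_mutualInfo_smul_one hW (div_pos hQ hm')).trans
    (le_csSup hbdd (Set.mem_image_of_mem _ hmem))
  rw [Ctpc]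
  linarith

lemma Ctpc_sub_le (hm : 0 < m) (hW : W.PosDef) {Q : ℝ} (hQ : 0 < Q) :
    Ctpc m W Q - m * log (Q / m) ≤ log W.det.re + m * (log (Q + W⁻¹.trace.re) - log Q) := by
  have : Nonempty (Fin m) := ⟨⟨0, hm⟩⟩
  have hm' : (0 : ℝ) < m := by exact_mod_cast hm
  have hle : Ctpc m W Q ≤ log W.det.re + m * log ((Q + W⁻¹.trace.re) / m) :=
    csSup_le ⟨_, Set.mem_image_of_mem _ (zero_mem_tpcSet hQ.le)⟩
      (Set.forall_mem_image.mpr fun _ hR => mutualInfo_le_of_mem_tpcSet hm hW hR)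
  rw [log_div (by linarith [hW.inv.re_trace_pos]) hm'.ne'] at hle
  rw [log_div hQ.ne' hm'.ne']
  linarith

/-- High-SNR asymptotics of the total-power-constrained capacity:
`C_TPC(P_T) − m·log(P_T/m) → log det W` as `P_T → ∞`. -/
theorem stmt13 (m : ℕ) (hm : 1 ≤ m) (W : Matrix (Fin m) (Fin m) ℂ) (hW : W.PosDef) :
    Filter.Tendsto (fun PT : ℝ => Ctpc m W PT - m * Real.log (PT / m))
      Filter.atTop (nhds (Real.log W.det.re)) := by
  have hupper : Tendsto (fun Q => log W.det.re + m * (log (Q + W⁻¹.trace.re) - log Q)) atTop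
      (𝓝 (log W.det.re)) := by
    simpa using ((tendsto_log_comp_add_sub_log _).const_mul (m : ℝ)).const_add (log W.det.re)
  refine tendsto_of_tendsto_of_tendsto_of_le_of_le' tendsto_const_nhds hupper ?_ ?_ <;>
    filter_upwards [eventually_gt_atTop 0] with Q hQ
  · exact log_det_le_Ctpc_sub hm hW hQ
  · exact Ctpc_sub_le hm hW hQ
end

section
/- Let m = 2, W = diag(1, 0), P_T = 2, and P = 1. Then for every a ∈ [0, 1], the matrix R_a = diag(1, a) lies in the joint constraint set S(P_T, P) and maximizes log det(I + W·R) over S(P_T, P), with optimal value log 2. Consequently: the optimal covariance is not unique; for a > 0 it has full rank 2 even though W has rank 1; and for a < 1 the total power constraint is inactive (tr R_a < P_T) while some per-antenna constraint is inactive too. -/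
/-! Since `W = diag(1, 0)`, `det (1 + W R) = 1 + R₀₀` sees only the first diagonal entry of `R`,
which the per-antenna constraint bounds by `P = 1`. Hence every admissible `R` with `R₀₀ = 1`
attains the maximum `log 2`, whatever its second diagonal entry. -/

open Matrix ComplexOrder

lemma Matrix.rank_diagonal_of_forall_ne_zero {m K : Type*} [Fintype m] [DecidableEq m] [Field K]
    [DecidableEq K] {w : m → K} (hw : ∀ i, w i ≠ 0) :
    (diagonal w).rank = Fintype.card m := by
  rw [rank_diagonal, Fintype.card_subtype, Finset.filter_true_of_mem fun i _ => hw i,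
    Finset.card_univ]

lemma Matrix.rank_diagonal_one_zero {K : Type*} [Field K] [DecidableEq K] :
    (diagonal ![(1 : K), 0]).rank = 1 := by
  rw [rank_diagonal, Fintype.card_eq_one_iff]
  refine ⟨⟨0, by simp⟩, fun ⟨i, hi⟩ => ?_⟩
  fin_cases i
  · rfl
  · exact (hi rfl).elim

lemma Matrix.det_one_add_diagonal_one_zero_mul {α : Type*} [CommRing α]
    (R : Matrix (Fin 2) (Fin 2) α) :
    (1 + diagonal ![(1 : α), 0] * R).det = 1 + R 0 0 := by
  simp [det_fin_two]

lemma diagonal_mem_jointSet_s18 {m : ℕ} {PT P : ℝ} {d : Fin m → ℂ} (hd : 0 ≤ d)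
    (htr : ∑ i, (d i).re ≤ PT) (hP : ∀ i, (d i).re ≤ P) :
    diagonal d ∈ jointSet m PT P :=
  ⟨PosSemidef.diagonal hd, by simpa [trace] using htr, by simpa using hP⟩

lemma mutualInfo_diagonal_one_zero (R : Matrix (Fin 2) (Fin 2) ℂ) :
    mutualInfo (diagonal ![(1 : ℂ), 0]) R = Real.log (1 + (R 0 0).re) := by
  simp [mutualInfo, det_one_add_diagonal_one_zero_mul]

lemma mutualInfo_diagonal_one_zero_le {PT P : ℝ} {R : Matrix (Fin 2) (Fin 2) ℂ}
    (hR : R ∈ jointSet 2 PT P) :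
    mutualInfo (diagonal ![(1 : ℂ), 0]) R ≤ Real.log (1 + P) := by
  have h0 : 0 ≤ (R 0 0).re := (Complex.nonneg_iff.mp hR.1.diag_nonneg).1
  rw [mutualInfo_diagonal_one_zero]
  exact Real.log_le_log (by linarith) (by linarith [hR.2.2 0])

/-- Rank-deficient channel example: for `W = diag(1,0)`, `P_T = 2`, `P = 1`, every
`R_a = diag(1, a)` with `a ∈ [0,1]` is an optimal covariance with value `log 2`:
optimal covariance is not unique, has full rank 2 for `a > 0` although `W` has rank 1,
and for `a < 1` the total power constraint (and a per-antenna constraint) is inactive. -/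
theorem stmt18 :
    (Matrix.diagonal ![(1 : ℂ), 0]).rank = 1 ∧
    ∀ a : ℝ, 0 ≤ a → a ≤ 1 →
      Matrix.diagonal ![(1 : ℂ), (a : ℂ)] ∈ jointSet 2 2 1 ∧
      (∀ R ∈ jointSet 2 2 1,
        mutualInfo (Matrix.diagonal ![(1 : ℂ), 0]) R ≤
          mutualInfo (Matrix.diagonal ![(1 : ℂ), 0]) (Matrix.diagonal ![(1 : ℂ), (a : ℂ)])) ∧
      mutualInfo (Matrix.diagonal ![(1 : ℂ), 0]) (Matrix.diagonal ![(1 : ℂ), (a : ℂ)])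
        = Real.log 2 ∧
      (0 < a → (Matrix.diagonal ![(1 : ℂ), (a : ℂ)]).rank = 2) ∧
      (a < 1 → (Matrix.diagonal ![(1 : ℂ), (a : ℂ)]).trace.re < 2 ∧
        ((Matrix.diagonal ![(1 : ℂ), (a : ℂ)]) 1 1).re < 1) := by
  refine ⟨rank_diagonal_one_zero, fun a ha0 ha1 => ?_⟩
  have hval : mutualInfo (diagonal ![(1 : ℂ), 0]) (diagonal ![(1 : ℂ), (a : ℂ)]) =
      Real.log 2 := by
    norm_num [mutualInfo_diagonal_one_zero]
  refine ⟨?_, fun R hR => ?_, hval, fun ha => ?_, fun ha => ?_⟩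
  · refine diagonal_mem_jointSet_s18 ?_ ?_ ?_
    · intro i; fin_cases i <;> simp [ha0]
    · simpa [Fin.sum_univ_two] using (by linarith : 1 + a ≤ 2)
    · intro i; fin_cases i <;> simp [ha1]
  · rw [hval]
    simpa [one_add_one_eq_two] using mutualInfo_diagonal_one_zero_le hR
  · refine (rank_diagonal_of_forall_ne_zero fun i => ?_).trans (Fintype.card_fin 2)
    fin_cases i <;> simp [ha.ne']
  · exact ⟨by simpa [trace_fin_two] using (by linarith : 1 + a < 2), by simpa using ha⟩
end
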